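/- arXiv:2006.05211 — 8 statements merged into one kernel-verified Lean document; each statement's English description precedes it below -/
import Mathlib

section
/- Let Π_{UY} be the extended tangent-space projection Π_{UY}[K] = ⟨K, Y⟩_{L²_ρ} Yᵀ + P_Y^⊥[(K, U)_{V'V} M⁻¹ Uᵀ] where M_{ij} = ⟨U_i, U_j⟩_H is invertible, Y orthonormal in L²_ρ, and P_Y^⊥ = Id − P_Y. Then (K, Π_{UY}[v])_{V'V,L²_ρ} = (Π_{UY}[K], v)_{V'V,L²_ρ} for all v ∈ L²_ρ(Γ;V) and K ∈ L²_ρ(Γ;V'). -/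
open MeasureTheory NormedSpace RealInnerProductSpace

/-- The projection `P_Y` onto the span of the stochastic basis `Y`,
`P_Y[g](ω) = Σ_j Y_j(ω) ⟨g, Y_j⟩_{L²_ρ}`, acting componentwise on vector-valued
(or dual-valued) square-integrable functions. -/
noncomputable def projY {Γ E : Type*} [MeasurableSpace Γ]
    [NormedAddCommGroup E] [NormedSpace ℝ E]
    (ρ : MeasureTheory.Measure Γ) {R : ℕ} (Y : Fin R → Γ → ℝ) (g : Γ → E) (ω : Γ) : E :=
  ∑ j, Y j ω • ∫ ω', Y j ω' • g ω' ∂ρ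

/-- Lemma 3.4: symmetry of the extended tangent-space projection
`Π_{UY}[·] = P_Y[·] + P_Y^⊥[(·,U) M⁻¹ Uᵀ]` with respect to the duality pairing
`(·,·)_{V'V,L²_ρ}`.  Here `(V,H,V')` is a Gelfand triple realized by a continuous
dense injective embedding `e : V ↪ H`, `U` is a linearly independent family in `V`
with invertible Gram matrix `M` (w.r.t. the `H` inner product), the `U_j` are viewed
in `V'` via `x ↦ ⟨U_j, x⟩_H`, and `Y` is orthonormal in `L²_ρ(Γ)`. -/
theorem stmt8 {Γ V H : Type*} [MeasurableSpace Γ]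
    [NormedAddCommGroup V] [InnerProductSpace ℝ V] [CompleteSpace V]
    [TopologicalSpace.SeparableSpace V]
    [NormedAddCommGroup H] [InnerProductSpace ℝ H] [CompleteSpace H]
    [TopologicalSpace.SeparableSpace H]
    (ρ : Measure Γ) [IsProbabilityMeasure ρ]
    (e : V →L[ℝ] H) (hinj : Function.Injective e) (hdense : DenseRange e)
    {R : ℕ} (U : Fin R → V) (hU : LinearIndependent ℝ U)
    (Y : Fin R → Γ → ℝ) (hYmeas : ∀ j, Measurable (Y j))
    (horth : ∀ i j, ∫ ω, Y i ω * Y j ω ∂ρ = if i = j then (1 : ℝ) else 0)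
    (M : Matrix (Fin R) (Fin R) ℝ) (hM : ∀ i j, M i j = ⟪e (U i), e (U j)⟫)
    (hMdet : IsUnit M.det)
    (K : Γ → (V →L[ℝ] ℝ)) (v : Γ → V)
    -- the `H`-orthogonal projection onto span U, in terms of `M⁻¹`
    (PU : V → V) (hPU : ∀ x : V, PU x = ∑ i, ∑ j, (⟪e x, e (U i)⟫ * M⁻¹ i j) • U j)
    -- `(K, U)_{V'V} M⁻¹ Uᵀ`, with `U_j` viewed as elements of `V'`
    (G : Γ → (V →L[ℝ] ℝ))
    (hG : ∀ ω, G ω = ∑ i, ∑ j, (K ω (U i) * M⁻¹ i j) • ((innerSL ℝ (e (U j))).comp e))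
    (hvi : ∀ j, Integrable (fun ω => Y j ω • v ω) ρ)
    (hKi : ∀ j, Integrable (fun ω => Y j ω • K ω) ρ)
    (hGi : ∀ j, Integrable (fun ω => Y j ω • G ω) ρ)
    (hPUi : ∀ j, Integrable (fun ω => Y j ω • PU (v ω)) ρ)
    (h1 : Integrable (fun ω =>
      K ω (projY ρ Y v ω + (PU (v ω) - projY ρ Y (fun ω' => PU (v ω')) ω))) ρ)
    (h2 : Integrable (fun ω =>
      (projY ρ Y K ω + (G ω - projY ρ Y G ω)) (v ω)) ρ) :
    ∫ ω, K ω (projY ρ Y v ω + (PU (v ω) - projY ρ Y (fun ω' => PU (v ω')) ω)) ∂ρ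
      = ∫ ω, (projY ρ Y K ω + (G ω - projY ρ Y G ω)) (v ω) ∂ρ := by
  -- notation
  classical
  -- symmetry of M and of M⁻¹
  have hMt : M.transpose = M := by
    ext i j
    simp only [Matrix.transpose_apply, hM]
    exact real_inner_comm _ _
  have hMinv : ∀ i j, M⁻¹ i j = M⁻¹ j i := by
    intro i j
    have h := congrArg (fun A => A j i) (Matrix.transpose_nonsing_inv M)
    simpa [hMt, Matrix.transpose_apply] using h
  -- Part A (generic w): ∫ K(P_Y w) = Σ_j ⟨b_j, ∫ Y_j w⟩, plus integrability
  have partA : ∀ (w : Γ → V), (∀ j, Integrable (fun ω => Y j ω • w ω) ρ) →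
      ((fun ω => K ω (projY ρ Y w ω))
        = fun ω => ∑ j, (Y j ω • K ω) (∫ ω', Y j ω' • w ω' ∂ρ)) := by
    intro w hw
    funext ω
    simp [projY, map_sum, _root_.map_smul]
  have partAint : ∀ (w : Γ → V),
      Integrable (fun ω => ∑ j, (Y j ω • K ω) (∫ ω', Y j ω' • w ω' ∂ρ)) ρ := by
    intro w
    exact integrable_finset_sum _ fun j _ => (hKi j).apply_continuousLinearMap _
  have partAeq : ∀ (w : Γ → V),
      (∫ ω, ∑ j, (Y j ω • K ω) (∫ ω', Y j ω' • w ω' ∂ρ) ∂ρ)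
        = ∑ j, (∫ ω, Y j ω • K ω ∂ρ) (∫ ω', Y j ω' • w ω' ∂ρ) := by
    intro w
    rw [integral_finset_sum _ fun j _ => (hKi j).apply_continuousLinearMap _]
    exact Finset.sum_congr rfl fun j _ =>
      (ContinuousLinearMap.integral_apply (hKi j) _).symm
  -- Part B (generic L): ∫ (P_Y L)(v) = Σ_j (∫ Y_j L)(∫ Y_j v), plus integrability
  have partB : ∀ (L : Γ → (V →L[ℝ] ℝ)),
      ((fun ω => (projY ρ Y L ω) (v ω))
        = fun ω => ∑ j, (∫ ω', Y j ω' • L ω' ∂ρ) (Y j ω • v ω)) := by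
    intro L
    funext ω
    simp [projY, ContinuousLinearMap.sum_apply, _root_.map_smul]
  have partBint : ∀ (L : Γ → (V →L[ℝ] ℝ)),
      Integrable (fun ω => ∑ j, (∫ ω', Y j ω' • L ω' ∂ρ) (Y j ω • v ω)) ρ := by
    intro L
    exact integrable_finset_sum _ fun j _ =>
      (∫ ω', Y j ω' • L ω' ∂ρ).integrable_comp (hvi j)
  have partBeq : ∀ (L : Γ → (V →L[ℝ] ℝ)),
      (∫ ω, ∑ j, (∫ ω', Y j ω' • L ω' ∂ρ) (Y j ω • v ω) ∂ρ)
        = ∑ j, (∫ ω', Y j ω' • L ω' ∂ρ) (∫ ω, Y j ω • v ω ∂ρ) := by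
    intro L
    rw [integral_finset_sum _ fun j _ =>
      (∫ ω', Y j ω' • L ω' ∂ρ).integrable_comp (hvi j)]
    exact Finset.sum_congr rfl fun j _ =>
      ContinuousLinearMap.integral_comp_comm _ (hvi j)
  -- Part C: pointwise K(PU v) = G(v)
  have hC : ∀ ω, K ω (PU (v ω)) = G ω (v ω) := by
    intro ω
    rw [hPU, hG]
    simp only [map_sum, _root_.map_smul, ContinuousLinearMap.sum_apply,
      ContinuousLinearMap.smul_apply, ContinuousLinearMap.coe_comp', Function.comp_apply,
      innerSL_apply_apply, smul_eq_mul]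
    rw [Finset.sum_comm]
    refine Finset.sum_congr rfl fun k _ => Finset.sum_congr rfl fun i _ => ?_
    rw [hMinv i k, real_inner_comm (e (v ω)) (e (U i))]
    ring
  -- PU as a continuous linear map
  set PUL : V →L[ℝ] V :=
    ∑ i, ∑ k, (M⁻¹ i k) • (((innerSL ℝ (e (U i))).comp e).smulRight (U k)) with hPULdef
  have hPUL : ∀ x, PUL x = PU x := by
    intro x
    rw [hPU, hPULdef]
    simp only [ContinuousLinearMap.sum_apply, ContinuousLinearMap.smul_apply,
      ContinuousLinearMap.smulRight_apply, ContinuousLinearMap.coe_comp', Function.comp_apply,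
      innerSL_apply_apply, smul_smul]
    refine Finset.sum_congr rfl fun i _ => Finset.sum_congr rfl fun k _ => ?_
    rw [real_inner_comm (e x) (e (U i)), mul_comm]
  -- c_j = PU (a_j)
  have hcj : ∀ j, (∫ ω, Y j ω • PU (v ω) ∂ρ) = PU (∫ ω, Y j ω • v ω ∂ρ) := by
    intro j
    have h : (fun ω => Y j ω • PU (v ω)) = fun ω => PUL (Y j ω • v ω) := by
      funext ω; rw [_root_.map_smul, hPUL]
    rw [h, ContinuousLinearMap.integral_comp_comm PUL (hvi j), hPUL]
  -- evaluation formula for d_j := ∫ Y_j • G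
  have hdj : ∀ (j : Fin R) (x : V), (∫ ω, Y j ω • G ω ∂ρ) x
      = ∑ i, ∑ k, (((∫ ω, Y j ω • K ω ∂ρ) (U i)) * (M⁻¹ i k * ⟪e (U k), e x⟫)) := by
    intro j x
    rw [ContinuousLinearMap.integral_apply (hGi j) x]
    have hpt : (fun ω => (Y j ω • G ω) x)
        = fun ω => ∑ i, ∑ k, (((Y j ω • K ω) (U i)) * (M⁻¹ i k * ⟪e (U k), e x⟫)) := by
      funext ω
      rw [ContinuousLinearMap.smul_apply, hG ω]
      simp only [ContinuousLinearMap.sum_apply, ContinuousLinearMap.smul_apply,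
        ContinuousLinearMap.coe_comp', Function.comp_apply, innerSL_apply_apply, smul_eq_mul,
        Finset.mul_sum]
      exact Finset.sum_congr rfl fun i _ => Finset.sum_congr rfl fun k _ => by ring
    rw [hpt, integral_finset_sum _ (fun i _ => integrable_finset_sum _ fun k _ =>
      ((hKi j).apply_continuousLinearMap (U i)).mul_const _)]
    refine Finset.sum_congr rfl fun i _ => ?_
    rw [integral_finset_sum _ (fun k _ =>
      ((hKi j).apply_continuousLinearMap (U i)).mul_const _)]
    refine Finset.sum_congr rfl fun k _ => ?_
    rw [integral_mul_const, ContinuousLinearMap.integral_apply (hKi j) (U i)]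
  -- key symmetry: b_j(c_j) = d_j(a_j)
  have hF : ∀ j : Fin R, (∫ ω, Y j ω • K ω ∂ρ) (∫ ω', Y j ω' • PU (v ω') ∂ρ)
      = (∫ ω', Y j ω' • G ω' ∂ρ) (∫ ω, Y j ω • v ω ∂ρ) := by
    intro j
    rw [hcj j, hdj j, hPU]
    simp only [map_sum, _root_.map_smul, smul_eq_mul]
    rw [Finset.sum_comm]
    refine Finset.sum_congr rfl fun k _ => Finset.sum_congr rfl fun i _ => ?_
    rw [hMinv i k, real_inner_comm (e (∫ ω, Y j ω • v ω ∂ρ)) (e (U i))]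
    ring
  -- integrability of the individual pieces
  have iA : Integrable (fun ω => K ω (projY ρ Y v ω)) ρ := by
    rw [partA v hvi]; exact partAint v
  have iD : Integrable (fun ω => K ω (projY ρ Y (fun ω' => PU (v ω')) ω)) ρ := by
    rw [partA (fun ω' => PU (v ω')) hPUi]; exact partAint _
  have h1' : Integrable (fun ω => K ω (projY ρ Y v ω)
      + (K ω (PU (v ω)) - K ω (projY ρ Y (fun ω' => PU (v ω')) ω))) ρ := by
    have h : (fun ω => K ω (projY ρ Y v ω + (PU (v ω) - projY ρ Y (fun ω' => PU (v ω')) ω)))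
        = fun ω => K ω (projY ρ Y v ω)
          + (K ω (PU (v ω)) - K ω (projY ρ Y (fun ω' => PU (v ω')) ω)) := by
      funext ω; rw [map_add, map_sub]
    rw [← h]; exact h1
  have iC : Integrable (fun ω => K ω (PU (v ω))) ρ := by
    have h := (h1'.sub iA).add iD
    exact h.congr (Filter.Eventually.of_forall fun ω => by
      simp only [Pi.add_apply, Pi.sub_apply]; ring)
  have iB : Integrable (fun ω => (projY ρ Y K ω) (v ω)) ρ := by
    rw [partB K]; exact partBint K
  have iE : Integrable (fun ω => (projY ρ Y G ω) (v ω)) ρ := by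
    rw [partB G]; exact partBint G
  have h2' : Integrable (fun ω => (projY ρ Y K ω) (v ω)
      + ((G ω) (v ω) - (projY ρ Y G ω) (v ω))) ρ := by
    have h : (fun ω => (projY ρ Y K ω + (G ω - projY ρ Y G ω)) (v ω))
        = fun ω => (projY ρ Y K ω) (v ω) + ((G ω) (v ω) - (projY ρ Y G ω) (v ω)) := by
      funext ω; rw [ContinuousLinearMap.add_apply, ContinuousLinearMap.sub_apply]
    rw [← h]; exact h2
  have iG : Integrable (fun ω => (G ω) (v ω)) ρ := by
    have h := (h2'.sub iB).add iE
    exact h.congr (Filter.Eventually.of_forall fun ω => by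
      simp only [Pi.add_apply, Pi.sub_apply]; ring)
  -- assemble LHS
  have hLHS : ∫ ω, K ω (projY ρ Y v ω + (PU (v ω) - projY ρ Y (fun ω' => PU (v ω')) ω)) ∂ρ
      = (∫ ω, K ω (projY ρ Y v ω) ∂ρ)
        + ((∫ ω, K ω (PU (v ω)) ∂ρ)
          - ∫ ω, K ω (projY ρ Y (fun ω' => PU (v ω')) ω) ∂ρ) := by
    rw [show (fun ω => K ω (projY ρ Y v ω + (PU (v ω) - projY ρ Y (fun ω' => PU (v ω')) ω)))
        = fun ω => K ω (projY ρ Y v ω)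
          + (K ω (PU (v ω)) - K ω (projY ρ Y (fun ω' => PU (v ω')) ω)) from
      funext fun ω => by rw [map_add, map_sub]]
    have iCD : Integrable (fun ω => K ω (PU (v ω))
        - K ω (projY ρ Y (fun ω' => PU (v ω')) ω)) ρ := iC.sub iD
    rw [integral_add iA iCD, integral_sub iC iD]
  have hRHS : ∫ ω, (projY ρ Y K ω + (G ω - projY ρ Y G ω)) (v ω) ∂ρ
      = (∫ ω, (projY ρ Y K ω) (v ω) ∂ρ)
        + ((∫ ω, (G ω) (v ω) ∂ρ) - ∫ ω, (projY ρ Y G ω) (v ω) ∂ρ) := by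
    rw [show (fun ω => (projY ρ Y K ω + (G ω - projY ρ Y G ω)) (v ω))
        = fun ω => (projY ρ Y K ω) (v ω) + ((G ω) (v ω) - (projY ρ Y G ω) (v ω)) from
      funext fun ω => by rw [ContinuousLinearMap.add_apply, ContinuousLinearMap.sub_apply]]
    have iGE : Integrable (fun ω => (G ω) (v ω) - (projY ρ Y G ω) (v ω)) ρ := iG.sub iE
    rw [integral_add iB iGE, integral_sub iG iE]
  rw [hLHS, hRHS]
  -- term 1
  have t1 : (∫ ω, K ω (projY ρ Y v ω) ∂ρ) = ∫ ω, (projY ρ Y K ω) (v ω) ∂ρ := by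
    rw [partA v hvi, partAeq v, partB K, partBeq K]
  -- term 2
  have t2 : (∫ ω, K ω (PU (v ω)) ∂ρ) = ∫ ω, (G ω) (v ω) ∂ρ :=
    integral_congr_ae (Filter.Eventually.of_forall fun ω => hC ω)
  -- term 3
  have t3 : (∫ ω, K ω (projY ρ Y (fun ω' => PU (v ω')) ω) ∂ρ)
      = ∫ ω, (projY ρ Y G ω) (v ω) ∂ρ := by
    rw [partA (fun ω' => PU (v ω')) hPUi, partAeq (fun ω' => PU (v ω')), partB G, partBeq G]
    exact Finset.sum_congr rfl fun j _ => hF j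
  rw [t1, t2, t3]
end

section
/- Under the same setting, if additionally the bilinear form ⟨·,·⟩_{𝓛,ρ} is symmetric and u̇ ∈ L²(0,T;L²_ρ(Γ;H)), then ‖u(T)‖²_{𝓛,ρ} + ∫₀ᵀ ‖u̇(t)‖²_{H,L²_ρ} dt ≤ ‖u(0)‖²_{𝓛,ρ} + ∫₀ᵀ ‖f(t)‖²_{H,L²_ρ} dt, where ‖v‖²_{𝓛,ρ} = ⟨v,v⟩_{𝓛,ρ}. -/
open MeasureTheory RealInnerProductSpace

/-- Proposition 5.1, estimate 2: in the same parabolic variational setting, if in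
addition the bilinear form `B = ⟨·,·⟩_𝓛` is symmetric (and coercive) and the time
derivative `u̇ = du` is `H`-valued (here `du t ∈ V`, measured in `H` via `e`), then
`‖u(T)‖²_𝓛 + ∫₀ᵀ ‖u̇‖²_H ≤ ‖u(0)‖²_𝓛 + ∫₀ᵀ ‖f‖²_H`,
where `‖x‖²_𝓛 = B x x`. -/
theorem stmt10 {V H : Type*}
    [NormedAddCommGroup V] [InnerProductSpace ℝ V] [CompleteSpace V]
    [NormedAddCommGroup H] [InnerProductSpace ℝ H] [CompleteSpace H]
    (e : V →L[ℝ] H) (hinj : Function.Injective e) (hdense : DenseRange e)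
    (C_P C_L : ℝ) (hCL : 0 < C_L) (hCP : 0 < C_P)
    (hemb : ∀ x : V, ‖e x‖ ≤ C_P * ‖x‖)
    (B : V →L[ℝ] V →L[ℝ] ℝ) (hcoer : ∀ x : V, C_L * ‖x‖ ^ 2 ≤ B x x)
    (hsymm : ∀ x y : V, B x y = B y x)
    (T : ℝ) (hT : 0 ≤ T)
    (u : ℝ → V) (du : ℝ → V) (f : ℝ → H)
    (hderiv : ∀ t : ℝ, HasDerivAt u (du t) t)
    (hvar : ∀ (t : ℝ) (x : V), ⟪e (du t), e x⟫ + B (u t) x = ⟪f t, e x⟫)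
    (hdui : IntervalIntegrable (fun t => ‖e (du t)‖ ^ 2) volume 0 T)
    (hfi : IntervalIntegrable (fun t => ‖f t‖ ^ 2) volume 0 T) :
    B (u T) (u T) + ∫ t in (0:ℝ)..T, ‖e (du t)‖ ^ 2
      ≤ B (u 0) (u 0) + ∫ t in (0:ℝ)..T, ‖f t‖ ^ 2 := by
  set φ : ℝ → ℝ := fun t => B (du t) (u t) + B (u t) (du t) with hφdef
  have hkey : ∀ t, B (u t) (du t) = ⟪f t, e (du t)⟫ - ‖e (du t)‖ ^ 2 := by
    intro t
    have h := hvar t (du t)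
    rw [real_inner_self_eq_norm_sq] at h
    linarith
  -- derivative of t ↦ B (u t) (u t)
  have hg : ∀ t : ℝ, HasDerivAt (fun s => B (u s) (u s)) (φ t) t := by
    intro t
    have h1 : HasDerivAt (fun s => B (u s)) (B (du t)) t :=
      B.hasFDerivAt.comp_hasDerivAt t (hderiv t)
    exact h1.clm_apply (hderiv t)
  -- measurability
  have hu_cont : Continuous u := by
    refine continuous_iff_continuousAt.2 fun t => (hderiv t).continuousAt
  have hdu_sm : StronglyMeasurable du := by
    have : du = deriv u := funext fun t => ((hderiv t).deriv).symm
    rw [this]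
    exact stronglyMeasurable_deriv u
  have hφ_sm : StronglyMeasurable φ := by
    have hc : Continuous fun p : V × V => B p.1 p.2 + B p.2 p.1 := by
      exact (B.continuous₂.comp continuous_id).add
        (B.continuous₂.comp continuous_swap)
    exact hc.comp_stronglyMeasurable (hdu_sm.prodMk hu_cont.stronglyMeasurable)
  -- integrability of φ
  have hφi : IntervalIntegrable φ volume 0 T := by
    refine ((hfi.add (hdui.const_mul 3)).mono_fun
      hφ_sm.aestronglyMeasurable ?_)
    filter_upwards with t
    have hb : |⟪f t, e (du t)⟫| ≤ ‖f t‖ * ‖e (du t)‖ := abs_real_inner_le_norm _ _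
    have : φ t = 2 * (⟪f t, e (du t)⟫ - ‖e (du t)‖ ^ 2) := by
      simp only [hφdef, hsymm (du t) (u t)]
      rw [hkey t]; ring
    rw [Real.norm_eq_abs, Real.norm_eq_abs, this]
    have h1 : (0:ℝ) ≤ ‖f t‖ ^ 2 + 3 * ‖e (du t)‖ ^ 2 := by positivity
    rw [abs_of_nonneg h1]
    have := abs_le.1 hb
    rw [abs_le]
    constructor <;> nlinarith [sq_nonneg (‖f t‖ - ‖e (du t)‖), sq_nonneg (‖f t‖ + ‖e (du t)‖)]
  -- FTC
  have hftc : ∫ t in (0:ℝ)..T, φ t = B (u T) (u T) - B (u 0) (u 0) :=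
    intervalIntegral.integral_eq_sub_of_hasDerivAt (fun t _ => hg t) hφi
  -- pointwise inequality and integral monotonicity
  have hmono : ∫ t in (0:ℝ)..T, (φ t + ‖e (du t)‖ ^ 2) ≤ ∫ t in (0:ℝ)..T, ‖f t‖ ^ 2 := by
    refine intervalIntegral.integral_mono_on hT (hφi.add hdui) hfi fun t _ => ?_
    have hb : |⟪f t, e (du t)⟫| ≤ ‖f t‖ * ‖e (du t)‖ := abs_real_inner_le_norm _ _
    have hφt : φ t = 2 * (⟪f t, e (du t)⟫ - ‖e (du t)‖ ^ 2) := by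
      simp only [hφdef, hsymm (du t) (u t)]
      rw [hkey t]; ring
    rw [hφt]
    have := abs_le.1 hb
    nlinarith [sq_nonneg (‖f t‖ - ‖e (du t)‖)]
  have hadd : ∫ t in (0:ℝ)..T, (φ t + ‖e (du t)‖ ^ 2)
      = (∫ t in (0:ℝ)..T, φ t) + ∫ t in (0:ℝ)..T, ‖e (du t)‖ ^ 2 :=
    intervalIntegral.integral_add hφi hdui
  rw [hadd, hftc] at hmono
  linarith
end

section
/- Discrete implicit stability: suppose a sequence u⁰,...,u^N in a Hilbert space satisfies, for each n, ⟨(u^{n+1}−u^n)/Δt, u^{n+1}⟩_H + a(u^{n+1}, u^{n+1}) = ⟨f^{n+1}, u^{n+1}⟩_H, where a is a bilinear form with a(v,v) ≥ C_L ‖v‖²_V and ‖v‖_H ≤ C_P‖v‖_V. Then ‖u^N‖²_H + Δt C_L Σ_{n=0}^{N−1} ‖u^{n+1}‖²_V ≤ ‖u⁰‖²_H + Δt (C_P²/C_L) Σ_{n=0}^{N−1} ‖f^{n+1}‖²_H. -/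
open RealInnerProductSpace

/-- Theorem 5.3 part 1 (abstract form): unconditional stability of the implicit
Euler scheme.  `V ⊂ H` via an embedding `e` with constant `C_P`, `a` a coercive
bilinear form with constant `C_L`; if
`⟨(u^{n+1}-u^n)/Δt, u^{n+1}⟩_H + a(u^{n+1}, u^{n+1}) = ⟨f^{n+1}, u^{n+1}⟩_H`
for each `n < N`, then
`‖u^N‖²_H + Δt C_L Σ ‖u^{n+1}‖²_V ≤ ‖u⁰‖²_H + Δt (C_P²/C_L) Σ ‖f^{n+1}‖²_H`. -/
theorem stmt11 {V H : Type*}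
    [NormedAddCommGroup V] [InnerProductSpace ℝ V]
    [NormedAddCommGroup H] [InnerProductSpace ℝ H]
    (e : V →L[ℝ] H) (C_P C_L : ℝ) (hCL : 0 < C_L) (hCP : 0 < C_P)
    (hemb : ∀ x : V, ‖e x‖ ≤ C_P * ‖x‖)
    (a : V →ₗ[ℝ] V →ₗ[ℝ] ℝ) (hcoer : ∀ x : V, C_L * ‖x‖ ^ 2 ≤ a x x)
    (Δt : ℝ) (hΔt : 0 < Δt) (N : ℕ)
    (u : ℕ → V) (f : ℕ → H)
    (hscheme : ∀ n < N,
      ⟪e (u (n + 1)) - e (u n), e (u (n + 1))⟫ / Δt + a (u (n + 1)) (u (n + 1))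
        = ⟪f (n + 1), e (u (n + 1))⟫) :
    ‖e (u N)‖ ^ 2 + Δt * C_L * ∑ n ∈ Finset.range N, ‖u (n + 1)‖ ^ 2
      ≤ ‖e (u 0)‖ ^ 2 + Δt * (C_P ^ 2 / C_L) * ∑ n ∈ Finset.range N, ‖f (n + 1)‖ ^ 2 := by
  induction N with
  | zero => simp
  | succ N ih =>
    have ih' := ih (fun n hn => hscheme n (hn.trans (Nat.lt_succ_self N)))
    have hs := hscheme N (Nat.lt_succ_self N)
    set A := e (u (N + 1)) with hA
    set B := e (u N) with hB
    -- step estimate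
    have hinner : ⟪A - B, A⟫ = Δt * (⟪f (N + 1), A⟫ - a (u (N + 1)) (u (N + 1))) := by
      field_simp at hs ⊢
      linarith [hs]
    have hsq : ‖A - B‖ ^ 2 = ‖A‖ ^ 2 - 2 * ⟪A, B⟫ + ‖B‖ ^ 2 := norm_sub_sq_real A B
    have hexp : ⟪A - B, A⟫ = ‖A‖ ^ 2 - ⟪A, B⟫ := by
      rw [inner_sub_left, real_inner_self_eq_norm_sq, real_inner_comm]
    have h1 : ‖A‖ ^ 2 - ‖B‖ ^ 2 ≤ 2 * ⟪A - B, A⟫ := by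
      nlinarith [sq_nonneg ‖A - B‖]
    have hfa : ⟪f (N + 1), A⟫ ≤ ‖f (N + 1)‖ * (C_P * ‖u (N + 1)‖) := by
      calc ⟪f (N + 1), A⟫ ≤ ‖f (N + 1)‖ * ‖A‖ := real_inner_le_norm _ _
        _ ≤ ‖f (N + 1)‖ * (C_P * ‖u (N + 1)‖) := by
            exact mul_le_mul_of_nonneg_left (hemb _) (norm_nonneg _)
    have hco := hcoer (u (N + 1))
    have hdiv : C_P ^ 2 / C_L * C_L = C_P ^ 2 := by field_simp
    have hstep : ‖A‖ ^ 2 + Δt * C_L * ‖u (N + 1)‖ ^ 2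
        ≤ ‖B‖ ^ 2 + Δt * (C_P ^ 2 / C_L) * ‖f (N + 1)‖ ^ 2 := by
      have hyoung : 2 * (‖f (N + 1)‖ * (C_P * ‖u (N + 1)‖))
          ≤ C_L * ‖u (N + 1)‖ ^ 2 + C_P ^ 2 / C_L * ‖f (N + 1)‖ ^ 2 := by
        have h := sq_nonneg (C_L * ‖u (N + 1)‖ - C_P * ‖f (N + 1)‖)
        have hD : C_P ^ 2 / C_L * C_L = C_P ^ 2 := div_mul_cancel₀ _ hCL.ne'
        nlinarith [h, hCL, hD, sq_nonneg (‖f (N + 1)‖)]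
      nlinarith [hΔt, h1, hinner, hfa, hco, hΔt.le]
    rw [Finset.sum_range_succ, Finset.sum_range_succ]
    nlinarith [hstep, ih']
end

section
/- Discrete implicit energy stability: if additionally a is symmetric and the sequence satisfies ⟨(u^{n+1}−u^n)/Δt, (u^{n+1}−u^n)/Δt⟩_H + a(u^{n+1}, (u^{n+1}−u^n)/Δt) = ⟨f^{n+1}, (u^{n+1}−u^n)/Δt⟩_H for each n, then a(u^N,u^N) + Δt Σ_{n=0}^{N−1} ‖(u^{n+1}−u^n)/Δt‖²_H ≤ a(u⁰,u⁰) + Δt Σ_{n=0}^{N−1} ‖f^{n+1}‖²_H. -/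
open RealInnerProductSpace

/-- Theorem 5.3 part 2 (abstract form): energy stability of the implicit Euler
scheme.  If `a` is in addition symmetric (and positive, being coercive) and
`‖(u^{n+1}-u^n)/Δt‖²_H + a(u^{n+1}, (u^{n+1}-u^n)/Δt) = ⟨f^{n+1}, (u^{n+1}-u^n)/Δt⟩_H`
for each `n < N`, then
`a(u^N,u^N) + Δt Σ ‖(u^{n+1}-u^n)/Δt‖²_H ≤ a(u⁰,u⁰) + Δt Σ ‖f^{n+1}‖²_H`. -/
theorem stmt12 {V H : Type*}
    [NormedAddCommGroup V] [InnerProductSpace ℝ V]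
    [NormedAddCommGroup H] [InnerProductSpace ℝ H]
    (e : V →L[ℝ] H) (C_P : ℝ) (hCP : 0 < C_P)
    (hemb : ∀ x : V, ‖e x‖ ≤ C_P * ‖x‖)
    (a : V →ₗ[ℝ] V →ₗ[ℝ] ℝ)
    (hsymm : ∀ x y : V, a x y = a y x)
    (hpos : ∀ x : V, 0 ≤ a x x)
    (Δt : ℝ) (hΔt : 0 < Δt) (N : ℕ)
    (u : ℕ → V) (f : ℕ → H)
    (hscheme : ∀ n < N,
      ‖(Δt)⁻¹ • (e (u (n + 1)) - e (u n))‖ ^ 2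
          + a (u (n + 1)) ((Δt)⁻¹ • (u (n + 1) - u n))
        = ⟪f (n + 1), (Δt)⁻¹ • (e (u (n + 1)) - e (u n))⟫) :
    a (u N) (u N) + Δt * ∑ n ∈ Finset.range N, ‖(Δt)⁻¹ • (e (u (n + 1)) - e (u n))‖ ^ 2
      ≤ a (u 0) (u 0) + Δt * ∑ n ∈ Finset.range N, ‖f (n + 1)‖ ^ 2 :=
  by
  induction N with
  | zero => simp
  | succ N ih =>
    have IH := ih (fun n hn => hscheme n (Nat.lt_succ_of_lt hn))
    rw [Finset.sum_range_succ, Finset.sum_range_succ]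
    have hs := hscheme N (Nat.lt_succ_self N)
    set d := (Δt)⁻¹ • (e (u (N+1)) - e (u N)) with hd
    have h1 : ⟪f (N+1), d⟫ ≤ (‖f (N+1)‖^2 + ‖d‖^2)/2 := by
      calc ⟪f (N+1), d⟫ ≤ ‖f (N+1)‖ * ‖d‖ := real_inner_le_norm _ _
        _ ≤ _ := by nlinarith [sq_nonneg (‖f (N+1)‖ - ‖d‖)]
    have h2 : a (u (N+1)) ((Δt)⁻¹ • (u (N+1) - u N))
        = Δt⁻¹ * (a (u (N+1)) (u (N+1)) - a (u (N+1)) (u N)) := by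
      simp only [map_smul, map_sub, LinearMap.sub_apply, smul_eq_mul]
    have h3 : 0 ≤ a (u (N+1) - u N) (u (N+1) - u N) := hpos _
    have h4 : a (u (N+1) - u N) (u (N+1) - u N)
        = a (u (N+1)) (u (N+1)) - 2 * a (u (N+1)) (u N) + a (u N) (u N) := by
      simp [map_sub, LinearMap.sub_apply, hsymm (u N) (u (N+1))]; ring
    have hc : Δt * Δt⁻¹ = 1 := mul_inv_cancel₀ hΔt.ne'
    rw [h2] at hs
    have key : a (u (N+1)) (u (N+1)) - a (u N) (u N) + Δt * ‖d‖^2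
        ≤ Δt * ‖f (N+1)‖^2 := by
      have h6 : Δt * (Δt⁻¹ * (a (u (N+1)) (u (N+1)) - a (u (N+1)) (u N)))
          = a (u (N+1)) (u (N+1)) - a (u (N+1)) (u N) := by field_simp
      have h7 : Δt * (‖d‖^2 + Δt⁻¹ * (a (u (N+1)) (u (N+1)) - a (u (N+1)) (u N)))
          = Δt * ⟪f (N+1), d⟫ := by rw [hs]
      have h8 : Δt * ⟪f (N+1), d⟫ ≤ Δt * ((‖f (N+1)‖^2 + ‖d‖^2)/2) :=
        mul_le_mul_of_nonneg_left h1 hΔt.le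
      nlinarith [h3, h4, h6, h7, h8]
    linarith [IH]
end

section
/- Discrete explicit monotonicity (symmetric case, zero forcing): let a be a symmetric bilinear form on a finite-dimensional subspace W of H satisfying 0 ≤ a(v,v) ≤ C ‖v‖²_H for all v ∈ W. If u^{n+1}, u^n ∈ W satisfy ⟨u^{n+1}−u^n, w⟩_H + Δt a(u^n, w) = 0 for all w in a subspace containing u^{n+1}−u^n, and Δt ≤ 2/C, then a(u^{n+1},u^{n+1}) ≤ a(u^n,u^n). -/
open RealInnerProductSpace

/-- Theorem 5.4 part 4, first inequality (abstract form): explicit Euler energy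
monotonicity with zero forcing.  `a` is a symmetric bilinear form on `H` with
`0 ≤ a(v,v) ≤ C ‖v‖²_H` for `v` in a finite-dimensional subspace `W`; the update
`⟨u¹ - u⁰, w⟩_H + Δt a(u⁰, w) = 0` holds for all `w` in a subspace `S` containing
`u¹ - u⁰`.  Under the CFL condition `Δt ≤ 2/C`, `a(u¹,u¹) ≤ a(u⁰,u⁰)`. -/
theorem stmt13 {H : Type*} [NormedAddCommGroup H] [InnerProductSpace ℝ H]
    (W : Submodule ℝ H) [FiniteDimensional ℝ W]
    (a : H →ₗ[ℝ] H →ₗ[ℝ] ℝ)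
    (hsymm : ∀ x y : H, a x y = a y x)
    (C : ℝ) (hC : 0 < C)
    (hpos : ∀ v ∈ W, 0 ≤ a v v) (hbnd : ∀ v ∈ W, a v v ≤ C * ‖v‖ ^ 2)
    (Δt : ℝ) (hΔt : 0 < Δt) (hCFL : Δt ≤ 2 / C)
    (u0 u1 : H) (hu0 : u0 ∈ W) (hu1 : u1 ∈ W)
    (S : Submodule ℝ H) (hdS : u1 - u0 ∈ S)
    (hscheme : ∀ w ∈ S, ⟪u1 - u0, w⟫ + Δt * a u0 w = 0) :
    a u1 u1 ≤ a u0 u0 := by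
  set d := u1 - u0 with hd
  have hdW : d ∈ W := W.sub_mem hu1 hu0
  have hs := hscheme d hdS
  rw [real_inner_self_eq_norm_sq] at hs
  have had : a u0 d = -(‖d‖ ^ 2) / Δt := by
    field_simp at hs ⊢; linarith
  have hexp : a u1 u1 = a u0 u0 + 2 * a u0 d + a d d := by
    have h1 : u1 = u0 + d := by rw [hd]; abel
    rw [h1]
    simp only [map_add, LinearMap.add_apply]
    rw [hsymm d u0]; ring
  have hdd : a d d ≤ C * ‖d‖ ^ 2 := hbnd d hdW
  have hCle : C ≤ 2 / Δt := by
    rw [le_div_iff₀ hC] at hCFL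
    rw [le_div_iff₀ hΔt]; linarith
  have hn : 0 ≤ ‖d‖ ^ 2 := sq_nonneg _
  rw [hexp, had]
  have : C * ‖d‖ ^ 2 ≤ (2 / Δt) * ‖d‖ ^ 2 := by nlinarith
  have h2 : 2 * (-(‖d‖ ^ 2) / Δt) = -((2 / Δt) * ‖d‖ ^ 2) := by ring
  nlinarith [this]
end

section
/- Discrete explicit H-norm monotonicity (symmetric case, zero forcing): under the same assumptions (symmetric a with 0 ≤ a(v,v) ≤ C‖v‖²_H on W, update ⟨u^{n+1}−u^n, w⟩_H + Δt a(u^n, w) = 0 testable with both u^{n+1}−u^n and u^{n+1}+u^n, and Δt ≤ 2/C), it holds that ‖u^{n+1}‖_H ≤ ‖u^n‖_H. -/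
open RealInnerProductSpace

/-- Theorem 5.4 part 4, second inequality (abstract form): explicit Euler
`H`-norm monotonicity with zero forcing.  Same setting as the energy decrease:
symmetric `a` with `0 ≤ a(v,v) ≤ C‖v‖²_H` on the finite-dimensional subspace `W`,
update `⟨u¹ - u⁰, w⟩_H + Δt a(u⁰, w) = 0` testable with both `u¹ - u⁰` and
`u¹ + u⁰`, and `Δt ≤ 2/C`.  Then `‖u¹‖_H ≤ ‖u⁰‖_H`. -/
theorem stmt14 {H : Type*} [NormedAddCommGroup H] [InnerProductSpace ℝ H]
    (W : Submodule ℝ H) [FiniteDimensional ℝ W]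
    (a : H →ₗ[ℝ] H →ₗ[ℝ] ℝ)
    (hsymm : ∀ x y : H, a x y = a y x)
    (C : ℝ) (hC : 0 < C)
    (hpos : ∀ v ∈ W, 0 ≤ a v v) (hbnd : ∀ v ∈ W, a v v ≤ C * ‖v‖ ^ 2)
    (Δt : ℝ) (hΔt : 0 < Δt) (hCFL : Δt ≤ 2 / C)
    (u0 u1 : H) (hu0 : u0 ∈ W) (hu1 : u1 ∈ W)
    (S : Submodule ℝ H) (hdS : u1 - u0 ∈ S) (hsS : u1 + u0 ∈ S)
    (hscheme : ∀ w ∈ S, ⟪u1 - u0, w⟫ + Δt * a u0 w = 0) :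
    ‖u1‖ ≤ ‖u0‖ := by
  have hdW : u1 - u0 ∈ W := sub_mem hu1 hu0
  have hsW : u1 + u0 ∈ W := add_mem hu1 hu0
  have h1 := hscheme _ hdS
  have h2 := hscheme _ hsS
  have hdd : ⟪u1 - u0, u1 - u0⟫ = ‖u1 - u0‖ ^ 2 := real_inner_self_eq_norm_sq _
  have hds : ⟪u1 - u0, u1 + u0⟫ = ‖u1‖ ^ 2 - ‖u0‖ ^ 2 := by
    rw [inner_sub_left, inner_add_right, inner_add_right,
      real_inner_self_eq_norm_sq, real_inner_self_eq_norm_sq,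
      real_inner_comm u0 u1]
    ring
  have e1 : a u0 (u1 - u0) = a u0 u1 - a u0 u0 := by simp
  have e2 : a u0 (u1 + u0) = a u0 u1 + a u0 u0 := by simp
  have e3 : a (u1 - u0) (u1 - u0) = a u1 u1 - 2 * a u0 u1 + a u0 u0 := by
    simp only [map_sub, LinearMap.sub_apply]
    rw [hsymm u1 u0]; ring
  have e4 : a (u1 + u0) (u1 + u0) = a u1 u1 + 2 * a u0 u1 + a u0 u0 := by
    simp only [map_add, LinearMap.add_apply]
    rw [hsymm u1 u0]; ring
  have hbd := hbnd _ hdW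
  have hps := hpos _ hsW
  have hCΔ : C * Δt ≤ 2 := by
    rw [div_eq_mul_inv] at hCFL
    nlinarith [mul_le_mul_of_nonneg_left hCFL hC.le, mul_inv_cancel₀ hC.ne']
  rw [hdd, e1] at h1
  rw [hds, e2] at h2
  -- energy decrease: Δt * a u1 u1 ≤ Δt * a u0 u0
  have hdec : Δt * a u1 u1 ≤ Δt * a u0 u0 := by
    nlinarith [sq_nonneg ‖u1 - u0‖, mul_nonneg (sub_nonneg.mpr hCΔ) (sq_nonneg ‖u1 - u0‖),
      mul_le_mul_of_nonneg_left hbd hΔt.le]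
  have hsq : ‖u1‖ ^ 2 ≤ ‖u0‖ ^ 2 := by nlinarith [mul_nonneg hΔt.le hps]
  nlinarith [norm_nonneg u1, norm_nonneg u0]
end

section
/- Discrete explicit conditional stability (nonsymmetric case): let a(·,·) satisfy a(v,v) ≥ C_L‖v‖²_V and |a(v,w)| ≤ C_B‖v‖_V‖w‖_V on a space where the inverse inequality ‖v‖_V ≤ (C_I/h^p)‖v‖_H holds, and ‖v‖_H ≤ C_P‖v‖_V. If the sequence satisfies ⟨(u^{n+1}−u^n)/Δt, u^{n+1}⟩_H + a(u^n, u^{n+1}) = ⟨f^n, u^{n+1}⟩_H and Δt/h^{2p} ≤ κ C_L/(C_I² C_B²) for some κ ∈ (0,1), then ‖u^N‖²_H + Δt C_L(1−κ) Σ_{n=0}^{N−1} ‖u^{n+1}‖²_V ≤ ‖u⁰‖²_H + Δt(C_P²/C_L) Σ_{n=0}^{N−1} ‖f^n‖²_H. -/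
open RealInnerProductSpace

set_option maxHeartbeats 1000000 in
/-- Theorem 5.4 part 1 (abstract form): conditional stability of the explicit
Euler scheme.  `V` (the discrete space `V_h`) embeds in `H` via `e` with constant
`C_P`, satisfies the inverse inequality `‖v‖_V ≤ (C_I/h^p) ‖v‖_H`, and `a` is
coercive (`C_L`) and bounded (`C_B`).  If the scheme
`⟨(u^{n+1}-u^n)/Δt, u^{n+1}⟩_H + a(u^n, u^{n+1}) = ⟨f^n, u^{n+1}⟩_H` holds and
`Δt/h^{2p} ≤ κ C_L/(C_I² C_B²)` with `κ ∈ (0,1)`, then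
`‖u^N‖²_H + Δt C_L(1-κ) Σ ‖u^{n+1}‖²_V ≤ ‖u⁰‖²_H + Δt (C_P²/C_L) Σ ‖f^n‖²_H`. -/
theorem stmt15 {V H : Type*}
    [NormedAddCommGroup V] [InnerProductSpace ℝ V]
    [NormedAddCommGroup H] [InnerProductSpace ℝ H]
    (e : V →L[ℝ] H) (C_P C_L C_B C_I : ℝ)
    (hCL : 0 < C_L) (hCP : 0 < C_P) (hCB : 0 < C_B) (hCI : 0 < C_I)
    (hemb : ∀ x : V, ‖e x‖ ≤ C_P * ‖x‖)
    (h : ℝ) (hh : 0 < h) (p : ℕ)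
    (hinv : ∀ x : V, ‖x‖ ≤ (C_I / h ^ p) * ‖e x‖)
    (a : V →ₗ[ℝ] V →ₗ[ℝ] ℝ)
    (hcoer : ∀ x : V, C_L * ‖x‖ ^ 2 ≤ a x x)
    (hbnd : ∀ x y : V, |a x y| ≤ C_B * ‖x‖ * ‖y‖)
    (Δt : ℝ) (hΔt : 0 < Δt) (κ : ℝ) (hκ0 : 0 < κ) (hκ1 : κ < 1)
    (hCFL : Δt / h ^ (2 * p) ≤ κ * C_L / (C_I ^ 2 * C_B ^ 2))
    (N : ℕ) (u : ℕ → V) (f : ℕ → H)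
    (hscheme : ∀ n < N,
      ⟪e (u (n + 1)) - e (u n), e (u (n + 1))⟫ / Δt + a (u n) (u (n + 1))
        = ⟪f n, e (u (n + 1))⟫) :
    ‖e (u N)‖ ^ 2 + Δt * C_L * (1 - κ) * ∑ n ∈ Finset.range N, ‖u (n + 1)‖ ^ 2
      ≤ ‖e (u 0)‖ ^ 2 + Δt * (C_P ^ 2 / C_L) * ∑ n ∈ Finset.range N, ‖f n‖ ^ 2 := by
  -- CFL condition in product form
  have hhp : (0:ℝ) < h ^ p := pow_pos hh p
  have hCFL' : Δt * (C_I ^ 2 * C_B ^ 2) ≤ κ * C_L * (h ^ p) ^ 2 := by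
    have h2 : h ^ (2 * p) = (h ^ p) ^ 2 := by
      rw [mul_comm 2 p, pow_mul]
    have h3 := (div_le_div_iff₀ (by positivity) (by positivity)).mp hCFL
    rw [h2] at h3
    linarith
  -- key per-step estimate
  have step : ∀ n, (⟪e (u (n + 1)) - e (u n), e (u (n + 1))⟫ / Δt + a (u n) (u (n + 1))
        = ⟪f n, e (u (n + 1))⟫) →
      ‖e (u (n + 1))‖ ^ 2 + Δt * C_L * (1 - κ) * ‖u (n + 1)‖ ^ 2
        ≤ ‖e (u n)‖ ^ 2 + Δt * (C_P ^ 2 / C_L) * ‖f n‖ ^ 2 := by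
    intro n hs
    set u0 := u n
    set u1 := u (n + 1)
    set d := u1 - u0 with hd
    have hed : e u1 - e u0 = e d := by rw [hd, map_sub]
    have hinner : ⟪e u1 - e u0, e u1⟫ = Δt * (⟪f n, e u1⟫ - a u0 u1) := by
      field_simp at hs
      linarith [hs]
    have hnormid : 2 * ⟪e u1 - e u0, e u1⟫
        = ‖e u1‖ ^ 2 - ‖e u0‖ ^ 2 + ‖e u1 - e u0‖ ^ 2 := by
      have h1 : ‖e u1 - e u0‖ ^ 2 = ‖e u1‖ ^ 2 - 2 * ⟪e u1, e u0⟫ + ‖e u0‖ ^ 2 :=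
        norm_sub_sq_real _ _
      have h2 : ⟪e u1 - e u0, e u1⟫ = ⟪e u1, e u1⟫ - ⟪e u0, e u1⟫ := by
        rw [inner_sub_left]
      have h3 : ⟪e u1, e u1⟫ = ‖e u1‖ ^ 2 := real_inner_self_eq_norm_sq _
      have h4 : ⟪e u0, e u1⟫ = ⟪e u1, e u0⟫ := real_inner_comm _ _
      linarith
    have hsplit : a u0 u1 = a u1 u1 - a d u1 := by
      rw [hd, map_sub, LinearMap.sub_apply]; ring
    have hA : C_L * ‖u1‖ ^ 2 ≤ a u1 u1 := hcoer u1
    have hB : a d u1 ≤ C_B * ‖d‖ * ‖u1‖ := le_trans (le_abs_self _) (hbnd d u1)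
    have hn1 : (0:ℝ) ≤ ‖u1‖ := norm_nonneg _
    have hinvd : ‖d‖ ≤ (C_I / h ^ p) * ‖e u1 - e u0‖ := by
      rw [hed]; exact hinv d
    have hf : ⟪f n, e u1⟫ ≤ ‖f n‖ * (C_P * ‖u1‖) := by
      calc ⟪f n, e u1⟫ ≤ ‖f n‖ * ‖e u1‖ := real_inner_le_norm _ _
        _ ≤ ‖f n‖ * (C_P * ‖u1‖) := by
            have := hemb u1
            nlinarith [norm_nonneg (f n)]
    set D := ‖e u1 - e u0‖ with hD
    have hDnn : 0 ≤ D := norm_nonneg _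
    set X := Δt * C_B * C_I / h ^ p with hX
    have hXnn : 0 ≤ X := by positivity
    have hX2 : X ^ 2 ≤ Δt * (κ * C_L) := by
      rw [hX, div_pow, div_le_iff₀ (by positivity)]
      nlinarith [hCFL', hΔt]
    -- Young for the bilinear term
    have hyoung : 2 * Δt * (C_B * ‖d‖ * ‖u1‖) ≤ D ^ 2 + Δt * (κ * C_L) * ‖u1‖ ^ 2 := by
      have hXD : X * D = Δt * C_B * ((C_I / h ^ p) * D) := by rw [hX]; ring
      have h0 : Δt * C_B * ‖d‖ ≤ X * D := by
        rw [hXD]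
        exact mul_le_mul_of_nonneg_left hinvd (by positivity)
      have h1 : 2 * Δt * (C_B * ‖d‖ * ‖u1‖) ≤ 2 * (X * D) * ‖u1‖ := by
        have := mul_le_mul_of_nonneg_right h0 hn1
        nlinarith [this]
      have h2 : 2 * (X * D) * ‖u1‖ ≤ D ^ 2 + X ^ 2 * ‖u1‖ ^ 2 := by
        nlinarith [sq_nonneg (D - X * ‖u1‖)]
      have h3 : X ^ 2 * ‖u1‖ ^ 2 ≤ Δt * (κ * C_L) * ‖u1‖ ^ 2 :=
        mul_le_mul_of_nonneg_right hX2 (sq_nonneg _)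
      linarith
    -- Young for the source term
    have hfyoung : 2 * Δt * (‖f n‖ * (C_P * ‖u1‖))
        ≤ Δt * (C_P ^ 2 / C_L) * ‖f n‖ ^ 2 + Δt * C_L * ‖u1‖ ^ 2 := by
      have key : 2 * (‖f n‖ * (C_P * ‖u1‖)) ≤ C_P ^ 2 / C_L * ‖f n‖ ^ 2 + C_L * ‖u1‖ ^ 2 := by
        rw [← sub_nonneg]
        have heq : C_P ^ 2 / C_L * ‖f n‖ ^ 2 + C_L * ‖u1‖ ^ 2 - 2 * (‖f n‖ * (C_P * ‖u1‖))
            = (C_P * ‖f n‖ - C_L * ‖u1‖) ^ 2 / C_L := by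
          field_simp; ring
        rw [heq]; positivity
      nlinarith [key, hΔt]
    -- combine
    have hmain : ‖e u1‖ ^ 2 - ‖e u0‖ ^ 2 + D ^ 2 + 2 * Δt * a u0 u1
        = 2 * Δt * ⟪f n, e u1⟫ := by
      have h5 := hnormid
      rw [hinner] at h5
      linarith
    have hblow : 2 * Δt * (C_L * ‖u1‖ ^ 2) - 2 * Δt * (C_B * ‖d‖ * ‖u1‖)
        ≤ 2 * Δt * a u0 u1 := by
      rw [hsplit]
      nlinarith [hA, hB, hΔt]
    have hfn : 2 * Δt * ⟪f n, e u1⟫ ≤ 2 * Δt * (‖f n‖ * (C_P * ‖u1‖)) := by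
      nlinarith [hf, hΔt]
    nlinarith [hmain, hblow, hfn, hyoung, hfyoung]
  -- telescope
  clear hCFL hCFL'
  induction N with
  | zero => simp
  | succ N ih =>
    have ihs := ih (fun n hn => hscheme n (hn.trans (Nat.lt_succ_self N)))
    have key := step N (hscheme N (Nat.lt_succ_self N))
    rw [Finset.sum_range_succ, Finset.sum_range_succ]
    linarith
end

section
/- Semi-implicit unconditional energy stability: suppose a = a_det + a_stoch with a symmetric, a_det(v,v) ≥ C_det a(v,v) for all v with C_det ≥ 1/2, a(v,v) ≥ 0, and the update satisfies ⟨(u^{n+1}−u^n)/Δt, w⟩_H + a_det(u^{n+1}, w) + a_stoch(u^n, w) = 0 for w = u^{n+1}−u^n. Then a(u^{n+1}, u^{n+1}) ≤ a(u^n, u^n) for every Δt > 0. -/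
open RealInnerProductSpace

/-- Theorem 5.5 part 3 with `C_det ≥ 1/2` (abstract form): unconditional energy
stability of the semi-implicit scheme under small randomness.  `a = a_det + a_stoch`
with `a` symmetric positive semidefinite and `a_det(v,v) ≥ C_det a(v,v)` where
`C_det ≥ 1/2`; if the update satisfies
`⟨(u¹-u⁰)/Δt, w⟩_H + a_det(u¹, w) + a_stoch(u⁰, w) = 0` for `w = u¹ - u⁰`,
then `a(u¹,u¹) ≤ a(u⁰,u⁰)` for every `Δt > 0`. -/
theorem stmt16 {H : Type*} [NormedAddCommGroup H] [InnerProductSpace ℝ H]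
    (a adet astoch : H →ₗ[ℝ] H →ₗ[ℝ] ℝ)
    (hsymm : ∀ x y : H, a x y = a y x)
    (hdetsymm : ∀ x y : H, adet x y = adet y x)
    (hsplit : ∀ x y : H, a x y = adet x y + astoch x y)
    (hpos : ∀ x : H, 0 ≤ a x x)
    (C_det : ℝ) (hCdet : (1:ℝ)/2 ≤ C_det)
    (hdet : ∀ x : H, C_det * a x x ≤ adet x x)
    (Δt : ℝ) (hΔt : 0 < Δt)
    (u0 u1 : H)
    (hscheme : ⟪(Δt)⁻¹ • (u1 - u0), u1 - u0⟫ + adet u1 (u1 - u0)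
        + astoch u0 (u1 - u0) = 0) :
    a u1 u1 ≤ a u0 u0 := by
  set d := u1 - u0 with hd
  have hinner : (0:ℝ) ≤ ⟪(Δt)⁻¹ • d, d⟫ := by
    rw [real_inner_smul_left, real_inner_self_eq_norm_sq]
    positivity
  have hu1 : u1 = u0 + d := by simp [hd]
  -- adet u1 d = adet u0 d + adet d d
  have h1 : adet u1 d = adet u0 d + adet d d := by
    rw [hu1]; simp
  have h2 : astoch u0 d = a u0 d - adet u0 d := by
    rw [hsplit]; ring
  have hkey : adet d d + a u0 d ≤ 0 := by
    nlinarith [hscheme, h1, h2, hinner]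
  have hexp : a u1 u1 = a u0 u0 + 2 * a u0 d + a d d := by
    rw [hu1]; simp [hsymm d u0]; ring
  nlinarith [hdet d, hpos d, hkey, hexp, hCdet]
end
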